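/- Let Q ≥ 8 be even and l+1 = φ(Q)/2. There exists a constant c > 0 depending only on Q such that for every k ∈ Γ with |k| ≠ 1, one has ||k|² - 1| ≥ c / N_k^{2l}. -/

import Mathlib

/-- The `j`-th unit wavevector `k_{j+1} = (cos(2πj/Q), sin(2πj/Q))`, identified with
the complex number `e^{2πij/Q}`. -/
noncomputable def kvec (Q : ℕ) (j : ℕ) : ℂ :=
  Complex.exp (2 * Real.pi * Complex.I * j / Q)

/-- The quasilattice Γ: all combinations `Σ_j m_j k_j` with `m ∈ ℕ^Q`. -/
def Qlattice (Q : ℕ) : Set ℂ :=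
  {k | ∃ m : ℕ → ℕ, k = ∑ j ∈ Finset.range Q, (m j : ℂ) * kvec Q j}

/-- The order `N_k`: the minimal total number of generators needed to write `k`. -/
noncomputable def Nord (Q : ℕ) (k : ℂ) : ℕ :=
  sInf {n | ∃ m : ℕ → ℕ, (∑ j ∈ Finset.range Q, m j) = n ∧
    k = ∑ j ∈ Finset.range Q, (m j : ℂ) * kvec Q j}

/-!
Write `k = P(μ)` with `μ = e^{2πi/Q}` and `P = Σ m_j X^j`, where `P(1) = N_k`. In the cyclotomic
field `K = ℚ(ζ)` the algebraic integer `α = P(ζ) P(ζ⁻¹) - 1` is sent by every complex embedding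
`σ` to the real number `|P(σ ζ)|² - 1`, of size at most `N_k² + 1`. Since `K` is totally complex
with `φ(Q)/2 = l + 1` infinite places, each of multiplicity two, the product formula gives
`1 ≤ |N(α)| = ∏_w w(α)² ≤ ||k|² - 1|² (N_k² + 1)^{2l}`.
-/

open NumberField InfinitePlace Finset

theorem one_le_abs_norm_of_isIntegral {K : Type*} [Field K] [NumberField K] {α : K}
    (hα : IsIntegral ℤ α) (h0 : α ≠ 0) : 1 ≤ |Algebra.norm ℚ α| := by
  obtain ⟨z, hz⟩ := IsIntegrallyClosed.isIntegral_iff.mp (Algebra.isIntegral_norm ℚ hα)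
  have hz0 : z ≠ 0 := by
    rintro rfl
    exact h0 (by simpa using hz.symm)
  rw [← hz, eq_intCast, ← Int.cast_abs]
  exact_mod_cast Int.one_le_abs hz0

theorem one_le_sq_mul_pow_of_forall_le {K : Type*} [Field K] [NumberField K] [IsTotallyComplex K]
    {α : K} (hα : IsIntegral ℤ α) (h0 : α ≠ 0) {B : ℝ} (hB : ∀ w : InfinitePlace K, w α ≤ B)
    (w₀ : InfinitePlace K) : 1 ≤ w₀ α ^ 2 * (B ^ 2) ^ (nrComplexPlaces K - 1) := by
  classical
  have hcard : Fintype.card (InfinitePlace K) = nrComplexPlaces K := by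
    rw [card_eq_nrRealPlaces_add_nrComplexPlaces, IsTotallyComplex.nrRealPlaces_eq_zero, zero_add]
  calc (1 : ℝ) ≤ |Algebra.norm ℚ α| := by exact_mod_cast one_le_abs_norm_of_isIntegral hα h0
    _ = ∏ w : InfinitePlace K, w α ^ 2 := by
      simp only [← prod_eq_abs_norm, IsTotallyComplex.mult_eq]
    _ = w₀ α ^ 2 * ∏ w ∈ univ.erase w₀, w α ^ 2 := (mul_prod_erase _ _ (mem_univ _)).symm
    _ ≤ w₀ α ^ 2 * ∏ _w ∈ univ.erase w₀, B ^ 2 := by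
      gcongr with w
      exact hB w
    _ = w₀ α ^ 2 * (B ^ 2) ^ (nrComplexPlaces K - 1) := by
      rw [prod_const, card_erase_of_mem (mem_univ _), card_univ, hcard]

section natPolyEval

variable (m : ℕ → ℕ) (Q : ℕ)

def natPolyEval {R : Type*} [Semiring R] (x : R) : R := ∑ j ∈ range Q, (m j : R) * x ^ j

theorem map_natPolyEval {R S : Type*} [Semiring R] [Semiring S] (f : R →+* S) (x : R) :
    f (natPolyEval m Q x) = natPolyEval m Q (f x) := by
  simp [natPolyEval]

theorem isIntegral_natPolyEval {R A : Type*} [CommRing R] [CommRing A] [Algebra R A] {x : A}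
    (hx : IsIntegral R x) : IsIntegral R (natPolyEval m Q x) := by
  unfold natPolyEval
  exact IsIntegral.sum _ fun j _ => (isIntegral_natCast (m j)).mul (hx.pow j)

theorem norm_natPolyEval_le {x : ℂ} (hx : ‖x‖ = 1) :
    ‖natPolyEval m Q x‖ ≤ ∑ j ∈ range Q, m j := by
  push_cast
  refine (norm_sum_le _ _).trans_eq (sum_congr rfl fun j _ => ?_)
  rw [norm_mul, norm_pow, hx, one_pow, mul_one, Complex.norm_natCast]

theorem map_natPolyEval_mul_inv_sub_one {K : Type*} [Field K] (φ : K →+* ℂ) {ζ : K}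
    (hζ : ‖φ ζ‖ = 1) :
    φ (natPolyEval m Q ζ * natPolyEval m Q ζ⁻¹ - 1) =
      ((‖natPolyEval m Q (φ ζ)‖ ^ 2 - 1 : ℝ) : ℂ) := by
  rw [map_sub, map_one, map_mul, map_natPolyEval, map_natPolyEval, map_inv₀,
    Complex.inv_eq_conj hζ, ← map_natPolyEval m Q (starRingEnd ℂ), Complex.mul_conj']
  push_cast
  rfl

end natPolyEval

theorem abs_sq_sub_one_le {a b : ℝ} (ha : 0 ≤ a) (hab : a ≤ b) : |a ^ 2 - 1| ≤ b ^ 2 + 1 := by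
  rw [abs_le]
  constructor <;> nlinarith

theorem le_of_one_le_sq_mul_pow {x B : ℝ} {l : ℕ} (hx : 0 ≤ x) (hB : 0 < B)
    (h : 1 ≤ x ^ 2 * (B ^ 2) ^ l) : 1 / B ^ l ≤ x := by
  rw [← pow_mul, mul_comm 2 l, pow_mul, ← mul_pow] at h
  rw [div_le_iff₀ (by positivity)]
  exact (one_le_pow_iff_of_nonneg (by positivity) two_ne_zero).mp h

theorem one_div_pow_le_abs_norm_sq_sub_one {Q : ℕ} (hQ : 2 < Q) (m : ℕ → ℕ) {μ : ℂ}
    (hμ : IsPrimitiveRoot μ Q) (hk : ‖natPolyEval m Q μ‖ ≠ 1) :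
    1 / (((∑ j ∈ range Q, m j : ℕ) : ℝ) ^ 2 + 1) ^ (Q.totient / 2 - 1) ≤
      |‖natPolyEval m Q μ‖ ^ 2 - 1| := by
  have : NeZero Q := ⟨by omega⟩
  let K := CyclotomicField Q ℚ
  have : IsCyclotomicExtension {Q} ℚ K := CyclotomicField.isCyclotomicExtension Q ℚ
  have := IsCyclotomicExtension.Rat.isTotallyComplex K hQ
  have hζ := IsCyclotomicExtension.zeta_spec Q ℚ K
  set ζ := IsCyclotomicExtension.zeta Q ℚ K
  obtain ⟨φ₀, hφ₀⟩ := (hζ.embeddingsEquivPrimitiveRoots ℂ (Polynomial.cyclotomic.irreducible_rat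
    (by omega))).surjective ⟨μ, (mem_primitiveRoots (by omega)).mpr hμ⟩
  have hφ₀ζ : φ₀ ζ = μ := congrArg Subtype.val hφ₀
  have hnorm_ζ (φ : K →+* ℂ) : ‖φ ζ‖ = 1 :=
    (hζ.map_of_injective φ.injective).norm'_eq_one (by omega)
  set α := natPolyEval m Q ζ * natPolyEval m Q ζ⁻¹ - 1
  have hw (φ : K →+* ℂ) : mk φ α = |‖natPolyEval m Q (φ ζ)‖ ^ 2 - 1| := by
    rw [apply, map_natPolyEval_mul_inv_sub_one m Q φ (hnorm_ζ φ), Complex.norm_real,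
      Real.norm_eq_abs]
  have hα : IsIntegral ℤ α :=
    ((isIntegral_natPolyEval m Q (hζ.isIntegral (by omega))).mul
      (isIntegral_natPolyEval m Q (hζ.inv.isIntegral (by omega)))).sub isIntegral_one
  have hw₀ : mk φ₀.toRingHom α = |‖natPolyEval m Q μ‖ ^ 2 - 1| := by
    rw [hw, AlgHom.toRingHom_eq_coe, AlgHom.coe_toRingHom, hφ₀ζ]
  have hα0 : α ≠ 0 := by
    intro h
    rw [h, map_zero, eq_comm, abs_eq_zero, sub_eq_zero,
      pow_eq_one_iff_of_nonneg (norm_nonneg _) two_ne_zero] at hw₀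
    exact hk hw₀
  have hB (w : InfinitePlace K) : w α ≤ ((∑ j ∈ range Q, m j : ℕ) : ℝ) ^ 2 + 1 := by
    rw [← mk_embedding w, hw]
    exact abs_sq_sub_one_le (norm_nonneg _) (norm_natPolyEval_le m Q (hnorm_ζ _))
  have hprod := one_le_sq_mul_pow_of_forall_le hα hα0 hB (mk φ₀.toRingHom)
  rw [hw₀, IsCyclotomicExtension.Rat.nrComplexPlaces_eq_totient_div_two Q K] at hprod
  exact le_of_one_le_sq_mul_pow (abs_nonneg _) (by positivity) hprod

theorem half_pow_div_pow_le_one_div (N l : ℕ) :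
    (1 / 2 : ℝ) ^ l / (N : ℝ) ^ (2 * l) ≤ 1 / ((N : ℝ) ^ 2 + 1) ^ l := by
  rcases Nat.eq_zero_or_pos N with rfl | hN
  · rcases Nat.eq_zero_or_pos l with rfl | hl
    · norm_num
    · rw [Nat.cast_zero, zero_pow (by omega), div_zero]
      positivity
  · have hN1 : (1 : ℝ) ≤ N := by exact_mod_cast hN
    rw [pow_mul, ← div_pow, ← one_div_pow, div_div]
    gcongr
    nlinarith

theorem kvec_eq_pow (Q j : ℕ) : kvec Q j = Complex.exp (2 * Real.pi * Complex.I / Q) ^ j := by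
  rw [kvec, ← Complex.exp_nat_mul]
  ring_nf

theorem exists_sum_eq_nord {Q : ℕ} {k : ℂ} (hk : k ∈ Qlattice Q) :
    ∃ m : ℕ → ℕ, ∑ j ∈ range Q, m j = Nord Q k ∧
      k = ∑ j ∈ range Q, (m j : ℂ) * kvec Q j := by
  obtain ⟨m, hm⟩ := hk
  exact Nat.sInf_mem (s := {n | ∃ m : ℕ → ℕ, ∑ j ∈ range Q, m j = n ∧
    k = ∑ j ∈ range Q, (m j : ℂ) * kvec Q j}) ⟨_, m, rfl, hm⟩

theorem stmt_9_general (Q : ℕ) (hQ : 8 ≤ Q)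
    (l : ℕ) (hl : l + 1 = Nat.totient Q / 2) :
    ∃ c > (0 : ℝ), ∀ k ∈ Qlattice Q, ‖k‖ ≠ 1 →
      c / (Nord Q k : ℝ) ^ (2 * l) ≤ |(‖k‖) ^ 2 - 1| := by
  refine ⟨(1 / 2) ^ l, by positivity, fun k hk habsk => ?_⟩
  obtain ⟨m, hmN, hkm⟩ := exists_sum_eq_nord hk
  have hkμ : k = natPolyEval m Q (Complex.exp (2 * Real.pi * Complex.I / Q)) := by
    simp only [hkm, natPolyEval, kvec_eq_pow]
  have key := one_div_pow_le_abs_norm_sq_sub_one (by omega) m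
    (Complex.isPrimitiveRoot_exp Q (by omega)) (hkμ ▸ habsk)
  rw [← hl, Nat.add_sub_cancel, hmN, ← hkμ] at key
  exact (half_pow_div_pow_le_one_div _ l).trans key

/-- Diophantine bound: with l + 1 = φ(Q)/2 there is c > 0 such that
||k|² - 1| ≥ c / N_k^{2l} for every k ∈ Γ with |k| ≠ 1. -/
theorem stmt_9 (Q : ℕ) (hQ : 8 ≤ Q) (hQeven : Even Q)
    (l : ℕ) (hl : l + 1 = Nat.totient Q / 2) :
    ∃ c > (0 : ℝ), ∀ k ∈ Qlattice Q, ‖k‖ ≠ 1 →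
      c / (Nord Q k : ℝ) ^ (2 * l) ≤ |(‖k‖) ^ 2 - 1| :=
  stmt_9_general Q hQ l hl
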